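/- For L1, L2 in Cal⁰_Sym there is a natural isomorphism F(L1) ⊗_C F(L2) ≅ F(L1⊛L2) in Chu(Set₀,2₀), where ⊗_C is the Chu tensor product A₁⊗_C A₂ = (A₁∧A₂, t, Chu(A₁, A₂^⊥)). -/
import Mathlib


open Set

def PreservesJoins {α β : Type*} [CompleteLattice α] [CompleteLattice β] (f : α → β) : Prop :=
  ∀ s : Set α, f (sSup s) = sSup (f '' s)

def rAdj {α β : Type*} [CompleteLattice α] [CompleteLattice β] (f : α → β) : β → α :=
  fun b => sSup {a | f a ≤ b}

def atomsBelow {α : Type*} [CompleteLattice α] (a : α) : Set α := {p | IsAtom p ∧ p ≤ a}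

def coatomsAbove {α : Type*} [CompleteLattice α] (a : α) : Set α := {x | IsCoatom x ∧ a ≤ x}

/-- A morphism of `Cal⁰_Sym`: preserves arbitrary joins, sends atoms to atoms or `⊥`,
and its right adjoint sends coatoms to coatoms or `⊤`. -/
def IsMor {α β : Type*} [CompleteLattice α] [CompleteLattice β] (f : α → β) : Prop :=
  PreservesJoins f ∧ (∀ p : α, IsAtom p → IsAtom (f p) ∨ f p = ⊥) ∧
    (∀ x : β, IsCoatom x → IsCoatom (rAdj f x) ∨ rAdj f x = ⊤)

/-- Axiom A₀ : for any two coatoms `x`, `y`, the atoms below `x` together with the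
atoms below `y` do not exhaust all atoms. -/
def AxiomA0 (α : Type*) [CompleteLattice α] : Prop :=
  ∀ x y : α, IsCoatom x → IsCoatom y →
    atomsBelow x ∪ atomsBelow y ≠ {p : α | IsAtom p}

/-- The dual of axiom A₀ (A₀ in `Lᵒᵖ`). -/
def AxiomA0Dual (α : Type*) [CompleteLattice α] : Prop :=
  ∀ p q : α, IsAtom p → IsAtom q →
    coatomsAbove p ∪ coatomsAbove q ≠ {x : α | IsCoatom x}

/-- Conditions for a complete lattice to be an object of `Cal⁰_Sym`. -/
def CalCond (α : Type*) [CompleteLattice α] : Prop :=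
  IsAtomistic α ∧ IsCoatomistic α ∧ AxiomA0 α ∧ AxiomA0Dual α

def atomPairs (α β : Type*) [CompleteLattice α] [CompleteLattice β] : Set (α × β) :=
  {p | IsAtom p.1 ∧ IsAtom p.2}

def sec1 {α β : Type*} (R : Set (α × β)) (p₂ : β) : Set α := {q₁ | (q₁, p₂) ∈ R}

def sec2 {α β : Type*} (R : Set (α × β)) (p₁ : α) : Set β := {q₂ | (p₁, q₂) ∈ R}

/-- A section belongs to `Cl(Σ' ∪ {1})`: it is the set of atoms below a coatom,
or the set of all atoms. -/
def goodSec {α : Type*} [CompleteLattice α] (S : Set α) : Prop :=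
  (∃ x : α, IsCoatom x ∧ S = atomsBelow x) ∨ S = {p : α | IsAtom p}

/-- The set `Σ'_⊛` of the definition of `L1 ⊛ L2`. -/
def starCoatoms (α β : Type*) [CompleteLattice α] [CompleteLattice β] :
    Set (Set (α × β)) :=
  {R | R ⊂ atomPairs α β ∧ (∀ p₂ : β, IsAtom p₂ → goodSec (sec1 R p₂)) ∧
      (∀ p₁ : α, IsAtom p₁ → goodSec (sec2 R p₁))}

/-- The tensor product `L1 ⊛ L2`, as a closure system on `Σ₁ × Σ₂`
(`⋂₀ ∅` is normalized to the ground set `Σ₁ × Σ₂`). -/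
def tensorCS (α β : Type*) [CompleteLattice α] [CompleteLattice β] :
    Set (Set (α × β)) :=
  {S | ∃ ω ⊆ starCoatoms α β, S = atomPairs α β ∩ ⋂₀ ω}

/-- `a₁ □ a₂ = (Σ[a₁] × Σ₂) ∪ (Σ₁ × Σ[a₂])`. -/
def box {α β : Type*} [CompleteLattice α] [CompleteLattice β] (a₁ : α) (a₂ : β) :
    Set (α × β) :=
  {p ∈ atomPairs α β | p.1 ≤ a₁ ∨ p.2 ≤ a₂}

/-- `a₁ ∘ a₂ = Σ[a₁] × Σ[a₂]`. -/
def circ {α β : Type*} [CompleteLattice α] [CompleteLattice β] (a₁ : α) (a₂ : β) :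
    Set (α × β) :=
  {p ∈ atomPairs α β | p.1 ≤ a₁ ∧ p.2 ≤ a₂}

/-- Closure of a subset in a closure system. -/
def clF {X : Type*} (C : Set (Set X)) (T : Set X) : Set X := ⋂₀ {S ∈ C | T ⊆ S}

/-- Atoms of a closure system ordered by inclusion. -/
def IsAtomF {X : Type*} (C : Set (Set X)) (R : Set X) : Prop :=
  R ∈ C ∧ R ≠ ∅ ∧ ∀ S ∈ C, S ⊂ R → S = ∅

/-- Coatoms of a closure system with ground set `G`, ordered by inclusion. -/
def IsCoatomF {X : Type*} (C : Set (Set X)) (G : Set X) (R : Set X) : Prop :=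
  R ∈ C ∧ R ≠ G ∧ ∀ S ∈ C, R ⊂ S → S = G

universe u

/-- An object of `Chu(Set₀, 2₀)`: two pointed sets and a pointed pairing into `2₀`
(`r a x` means `r(a,x) = 1`; pointedness of `r` says `r(0,·) ≡ 0 ≡ r(·,0)`). -/
structure ChuObj : Type (u + 1) where
  A : Type u
  a0 : A
  X : Type u
  x0 : X
  r : A → X → Prop
  ha : ∀ x, ¬ r a0 x
  hx : ∀ a, ¬ r a x0

/-- A morphism of `Chu(Set₀, 2₀)`. -/
structure ChuHom (M N : ChuObj) where
  f : M.A → N.A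
  g : N.X → M.X
  hf : f M.a0 = N.a0
  hg : g N.x0 = M.x0
  compat : ∀ a y, N.r (f a) y ↔ M.r a (g y)

/-- An isomorphism of `Chu(Set₀, 2₀)`. -/
structure ChuIso (M N : ChuObj) where
  eA : M.A ≃ N.A
  eX : M.X ≃ N.X
  ha : eA M.a0 = N.a0
  hx : eX M.x0 = N.x0
  hr : ∀ a x, N.r (eA a) (eX x) ↔ M.r a x

/-- The functor `F` on objects : `F(L) = (Σ ∪ {0}, r, Σ' ∪ {1})`, with
`r(p,x) = 0 ⟺ p ≤ x`. -/
def FObj (α : Type u) [CompleteLattice α] : ChuObj where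
  A := Option {p : α // IsAtom p}
  a0 := none
  X := Option {x : α // IsCoatom x}
  x0 := none
  r := fun a x => match a, x with
    | some p, some y => ¬ (p.val ≤ y.val)
    | _, _ => False
  ha := by intro x h; cases x <;> exact h
  hx := by intro a h; cases a <;> exact h

/-- The dual `(A,r,X)^⊥ = (X, ř, A)` of a Chu object. -/
def ChuObj.dual (M : ChuObj) : ChuObj where
  A := M.X
  a0 := M.x0
  X := M.A
  x0 := M.a0
  r := fun x a => M.r a x
  ha := fun a => M.hx a
  hx := fun x => M.ha x

/-- The constant morphism `M → N^⊥`. -/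
def constHom (M N : ChuObj) : ChuHom M (ChuObj.dual N) where
  f := fun _ => N.x0
  g := fun _ => M.x0
  hf := rfl
  hg := rfl
  compat := fun a y => Iff.intro (fun h => absurd h (N.hx y)) (fun h => absurd h (M.hx a))

/-- The Chu tensor product `M ⊗_C N = (A_M ∧ A_N, t, Chu(M, N^⊥))`, pointed by the
constant morphism, with `t((a₁,a₂),(f,g)) = r_M(a₁, g(a₂))`. -/
def chuTensor (M N : ChuObj) : ChuObj where
  A := Option {x : M.A × N.A // x.1 ≠ M.a0 ∧ x.2 ≠ N.a0}
  a0 := none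
  X := ChuHom M (ChuObj.dual N)
  x0 := constHom M N
  r := fun a φ => match a with
    | none => False
    | some x => M.r x.val.1 (φ.g x.val.2)
  ha := fun _ h => h
  hx := by
    intro a
    cases a with
    | none => exact fun h => h
    | some x => exact fun h => M.hx _ h

/-- The Chu object `F(L)` of a closure system `C` with ground set `G`: atoms are the
points of `G`, coatoms are the coatoms of `C`, and `r(p,R) = 0 ⟺ p ∈ R`. -/
def FObjCS {Y : Type u} (C : Set (Set Y)) (G : Set Y) : ChuObj where
  A := Option {p : Y // p ∈ G}
  a0 := none
  X := Option {R : Set Y // IsCoatomF C G R}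
  x0 := none
  r := fun a x => match a, x with
    | some p, some R => p.val ∉ R.val
    | _, _ => False
  ha := by intro x h; cases x <;> exact h
  hx := by intro a h; cases a <;> exact h

/-! ### Auxiliary lemmas -/

section LatticeAux

variable {γ : Type*} [CompleteLattice γ]

lemma atomsBelow_mono (hA : IsAtomistic γ) {x y : γ} (h : atomsBelow x ⊆ atomsBelow y) :
    x ≤ y := by
  haveI := hA
  conv_lhs => rw [← sSup_atoms_le_eq x]
  exact sSup_le fun p hp => (h hp).2

lemma atomsBelow_ne_allAtoms (hA : IsAtomistic γ) {x : γ} (hx : IsCoatom x) :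
    atomsBelow x ≠ {p : γ | IsAtom p} := by
  haveI := hA
  intro h
  apply hx.1
  have h1 : sSup (atomsBelow x) = x := sSup_atoms_le_eq x
  have h2 : sSup {p : γ | IsAtom p} = ⊤ := sSup_atoms_eq_top
  rw [h, h2] at h1
  exact h1.symm

lemma sec_good_eq (hA : IsAtomistic γ) {S S' : Set γ}
    (hS : goodSec S) (hsub : S ⊆ S') {x : γ} (hx : IsCoatom x) (hS' : S' = atomsBelow x) :
    S = S' := by
  subst hS'
  rcases hS with ⟨x', hx', rfl⟩ | rfl
  · have h1 : x' ≤ x := atomsBelow_mono hA hsub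
    rcases h1.lt_or_eq with h2 | h2
    · exact absurd (hx'.2 x h2) hx.1
    · rw [h2]
  · exfalso
    apply atomsBelow_ne_allAtoms hA hx
    exact subset_antisymm (fun p hp => hp.1) hsub

end LatticeAux

section Antichain

variable {α β : Type u} [CompleteLattice α] [CompleteLattice β]

lemma star_antichain (hAα : IsAtomistic α) (hAβ : IsAtomistic β) (hA0 : AxiomA0 β)
    {R T : Set (α × β)} (hR : R ∈ starCoatoms α β) (hT : T ∈ starCoatoms α β)
    (hsub : R ⊆ T) : R = T := by
  by_contra hne
  obtain ⟨z₀, hz₀T, hz₀R⟩ := Set.exists_of_ssubset (ssubset_of_subset_of_ne hsub hne)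
  obtain ⟨p₀, q₀⟩ := z₀
  obtain ⟨hp₀, hq₀⟩ := hT.1.subset hz₀T
  have hgR : goodSec (sec2 R p₀) := hR.2.2 p₀ hp₀
  have hgT : goodSec (sec2 T p₀) := hT.2.2 p₀ hp₀
  have hsub2 : sec2 R p₀ ⊆ sec2 T p₀ := fun q h => hsub h
  have hTall : sec2 T p₀ = {q : β | IsAtom q} := by
    rcases hgT with ⟨x, hx, hEq⟩ | h
    · exfalso
      have heq := sec_good_eq hAβ hgR hsub2 hx hEq
      exact hz₀R (show q₀ ∈ sec2 R p₀ from heq ▸ hz₀T)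
    · exact h
  obtain ⟨x, hx, hxEq⟩ : ∃ x : β, IsCoatom x ∧ sec2 R p₀ = atomsBelow x := by
    rcases hgR with h | h
    · exact h
    · exact absurd (show q₀ ∈ sec2 R p₀ from h ▸ hq₀) hz₀R
  obtain ⟨z₁, hz₁A, hz₁T⟩ := Set.exists_of_ssubset hT.1
  obtain ⟨p₁, q₁⟩ := z₁
  obtain ⟨hp₁, hq₁⟩ := hz₁A
  obtain ⟨x₁, hx₁, hx₁Eq⟩ : ∃ x₁ : β, IsCoatom x₁ ∧ sec2 T p₁ = atomsBelow x₁ := by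
    rcases hT.2.2 p₁ hp₁ with h | h
    · exact h
    · exact absurd (show q₁ ∈ sec2 T p₁ from h ▸ hq₁) hz₁T
  obtain ⟨q₂, hq₂a, hq₂x, hq₂x₁⟩ :
      ∃ q₂ : β, IsAtom q₂ ∧ q₂ ∉ atomsBelow x ∧ q₂ ∉ atomsBelow x₁ := by
    by_contra h'
    push_neg at h'
    apply hA0 x x₁ hx hx₁
    apply subset_antisymm
    · rintro q (hq | hq) <;> exact hq.1
    · intro q hq
      rcases Classical.em (q ∈ atomsBelow x) with h | h
      · exact Or.inl h
      · exact Or.inr (h' q hq h)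
  have h1 : (p₀, q₂) ∈ T := by
    have : q₂ ∈ sec2 T p₀ := by rw [hTall]; exact hq₂a
    exact this
  have h2 : (p₁, q₂) ∉ T := fun h => hq₂x₁ (hx₁Eq ▸ (show q₂ ∈ sec2 T p₁ from h))
  obtain ⟨y₂, hy₂, hy₂Eq⟩ : ∃ y₂ : α, IsCoatom y₂ ∧ sec1 T q₂ = atomsBelow y₂ := by
    rcases hT.2.1 q₂ hq₂a with h | h
    · exact h
    · exact absurd (show p₁ ∈ sec1 T q₂ from h ▸ hp₁) h2
  have hsec1eq : sec1 R q₂ = sec1 T q₂ :=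
    sec_good_eq hAα (hR.2.1 q₂ hq₂a) (fun p h => hsub h) hy₂ hy₂Eq
  have h3 : (p₀, q₂) ∈ R := by
    have : p₀ ∈ sec1 R q₂ := by rw [hsec1eq]; exact h1
    exact this
  exact hq₂x (hxEq ▸ (show q₂ ∈ sec2 R p₀ from h3))

lemma atomPairs_mem_tensorCS : atomPairs α β ∈ tensorCS α β :=
  ⟨∅, by simp, by simp⟩

lemma star_mem_tensorCS {R : Set (α × β)} (hR : R ∈ starCoatoms α β) :
    R ∈ tensorCS α β := by
  refine ⟨{R}, by simpa using hR, ?_⟩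
  rw [Set.sInter_singleton, Set.inter_eq_right.mpr hR.1.subset]

lemma isCoatomF_of_star (hAα : IsAtomistic α) (hAβ : IsAtomistic β) (hA0 : AxiomA0 β)
    {R : Set (α × β)} (hR : R ∈ starCoatoms α β) :
    IsCoatomF (tensorCS α β) (atomPairs α β) R := by
  refine ⟨star_mem_tensorCS hR, hR.1.ne, ?_⟩
  rintro S ⟨ω, hω, rfl⟩ hRS
  rcases Set.eq_empty_or_nonempty ω with rfl | ⟨T, hT⟩
  · simp
  · exfalso
    have hsubT : R ⊆ T := fun z hz => ((hRS.subset hz).2 : z ∈ ⋂₀ ω) T hT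
    have := star_antichain hAα hAβ hA0 hR (hω hT) hsubT
    obtain ⟨z, hzS, hzR⟩ := Set.exists_of_ssubset hRS
    exact hzR (this ▸ ((hzS.2 : z ∈ ⋂₀ ω) T hT))

lemma star_of_isCoatomF {R : Set (α × β)}
    (h : IsCoatomF (tensorCS α β) (atomPairs α β) R) : R ∈ starCoatoms α β := by
  obtain ⟨⟨ω, hω, rfl⟩, hne, hmax⟩ := h
  rcases Set.eq_empty_or_nonempty ω with rfl | ⟨T, hT⟩
  · simp at hne
  · have hsub : atomPairs α β ∩ ⋂₀ ω ⊆ T := fun z hz => (hz.2 : z ∈ ⋂₀ ω) T hT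
    by_cases heq : atomPairs α β ∩ ⋂₀ ω = T
    · rw [heq]; exact hω hT
    · exfalso
      have := hmax T (star_mem_tensorCS (hω hT)) (ssubset_of_subset_of_ne hsub heq)
      exact (hω hT).1.ne this

end Antichain

section Pick

variable {γ : Type u} [CompleteLattice γ]

/-- Choose a coatom representing a section, if one exists. -/
noncomputable def pick (S : Set γ) : Option {x : γ // IsCoatom x} :=
  @dite _ (∃ x : γ, IsCoatom x ∧ S = atomsBelow x) (Classical.dec _)
    (fun h => some ⟨h.choose, h.choose_spec.1⟩) (fun _ => none)

lemma pick_some {S : Set γ} {x : {x : γ // IsCoatom x}} (h : pick S = some x) :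
    S = atomsBelow x.val := by
  unfold pick at h
  split at h
  · rename_i hex
    obtain rfl := Option.some.inj h
    exact hex.choose_spec.2
  · exact absurd h (by simp)

lemma pick_atomsBelow (hA : IsAtomistic γ) {x : γ} (hx : IsCoatom x) :
    pick (atomsBelow x) = some ⟨x, hx⟩ := by
  have hex : ∃ y : γ, IsCoatom y ∧ atomsBelow x = atomsBelow y := ⟨x, hx, rfl⟩
  unfold pick
  rw [dif_pos hex]
  have hspec := hex.choose_spec
  have : hex.choose = x :=
    le_antisymm (atomsBelow_mono hA (le_of_eq hspec.2.symm))
      (atomsBelow_mono hA (le_of_eq hspec.2))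
  exact congrArg some (Subtype.ext this)

lemma pick_allAtoms (hA : IsAtomistic γ) : pick {p : γ | IsAtom p} = none := by
  unfold pick
  rw [dif_neg]
  rintro ⟨x, hx, hEq⟩
  exact atomsBelow_ne_allAtoms hA hx hEq.symm

lemma pick_none_goodSec (hA : IsAtomistic γ) {S : Set γ} (hS : goodSec S)
    (h : pick S = none) : S = {p : γ | IsAtom p} := by
  rcases hS with ⟨x, hx, rfl⟩ | h'
  · rw [pick_atomsBelow hA hx] at h; cases h
  · exact h'

lemma r_pick (hA : IsAtomistic γ) {S : Set γ} (hS : goodSec S)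
    {q : γ} (hq : IsAtom q) : (FObj γ).r (some ⟨q, hq⟩) (pick S) ↔ q ∉ S := by
  cases h : pick S with
  | none =>
    have hall := pick_none_goodSec hA hS h
    refine iff_of_false (fun hf => hf) (fun hn => hn ?_)
    rw [hall]; exact hq
  | some x =>
    have hSx := pick_some h
    show ¬ q ≤ x.val ↔ q ∉ S
    rw [hSx]
    constructor
    · exact fun hle hm => hle hm.2
    · exact fun hm hle => hm ⟨hq, hle⟩

end Pick

section RelDef

variable {α β : Type u} [CompleteLattice α] [CompleteLattice β]

/-- The relation on atoms encoded by a Chu morphism `F(L1) → F(L2)^⊥`. -/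
def relOf (φ : ChuHom (FObj α) ((FObj β).dual)) : Set (α × β) :=
  {z | ∃ h : IsAtom z.1 ∧ IsAtom z.2,
    ¬ (FObj α).r (some ⟨z.1, h.1⟩) (φ.g (some ⟨z.2, h.2⟩))}

lemma relOf_subset (φ : ChuHom (FObj α) ((FObj β).dual)) : relOf φ ⊆ atomPairs α β :=
  fun _ hz => hz.choose

lemma mem_relOf_iff {φ : ChuHom (FObj α) ((FObj β).dual)} {p : α} {q : β}
    (hp : IsAtom p) (hq : IsAtom q) :
    (p, q) ∈ relOf φ ↔ ¬ (FObj α).r (some ⟨p, hp⟩) (φ.g (some ⟨q, hq⟩)) :=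
  ⟨fun hz => hz.choose_spec, fun h => ⟨⟨hp, hq⟩, h⟩⟩

lemma mem_relOf_iff_f {φ : ChuHom (FObj α) ((FObj β).dual)} {p : α} {q : β}
    (hp : IsAtom p) (hq : IsAtom q) :
    (p, q) ∈ relOf φ ↔ ¬ (FObj β).r (some ⟨q, hq⟩) (φ.f (some ⟨p, hp⟩)) := by
  have hc := φ.compat (some ⟨p, hp⟩) (some ⟨q, hq⟩)
  rw [mem_relOf_iff hp hq]
  exact not_congr hc.symm

lemma sec1_relOf_none {φ : ChuHom (FObj α) ((FObj β).dual)} {q : β} (hq : IsAtom q)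
    (h : φ.g (some ⟨q, hq⟩) = none) : sec1 (relOf φ) q = {p : α | IsAtom p} := by
  ext p
  constructor
  · exact fun hz => hz.choose.1
  · intro hp
    rw [show (p ∈ sec1 (relOf φ) q) = ((p, q) ∈ relOf φ) from rfl, mem_relOf_iff hp hq, h]
    exact fun hf => hf
  
lemma sec1_relOf_some {φ : ChuHom (FObj α) ((FObj β).dual)} {q : β} (hq : IsAtom q)
    {y : {y : α // IsCoatom y}} (h : φ.g (some ⟨q, hq⟩) = some y) :
    sec1 (relOf φ) q = atomsBelow y.val := by
  ext p
  rw [show (p ∈ sec1 (relOf φ) q) = ((p, q) ∈ relOf φ) from rfl]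
  constructor
  · intro hz
    have hp : IsAtom p := hz.choose.1
    rw [mem_relOf_iff hp hq, h] at hz
    exact ⟨hp, not_not.mp hz⟩
  · rintro ⟨hp, hpy⟩
    rw [mem_relOf_iff hp hq, h]
    exact not_not.mpr hpy

lemma sec2_relOf_none {φ : ChuHom (FObj α) ((FObj β).dual)} {p : α} (hp : IsAtom p)
    (h : φ.f (some ⟨p, hp⟩) = none) : sec2 (relOf φ) p = {q : β | IsAtom q} := by
  ext q
  constructor
  · exact fun hz => hz.choose.2
  · intro hq
    rw [show (q ∈ sec2 (relOf φ) p) = ((p, q) ∈ relOf φ) from rfl, mem_relOf_iff_f hp hq, h]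
    exact fun hf => hf

lemma sec2_relOf_some {φ : ChuHom (FObj α) ((FObj β).dual)} {p : α} (hp : IsAtom p)
    {x : {x : β // IsCoatom x}} (h : φ.f (some ⟨p, hp⟩) = some x) :
    sec2 (relOf φ) p = atomsBelow x.val := by
  ext q
  rw [show (q ∈ sec2 (relOf φ) p) = ((p, q) ∈ relOf φ) from rfl]
  constructor
  · intro hz
    have hq : IsAtom q := hz.choose.2
    rw [mem_relOf_iff_f hp hq, h] at hz
    exact ⟨hq, not_not.mp hz⟩
  · rintro ⟨hq, hqx⟩
    rw [mem_relOf_iff_f hp hq, h]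
    exact not_not.mpr hqx

lemma relOf_star {φ : ChuHom (FObj α) ((FObj β).dual)} (h : relOf φ ≠ atomPairs α β) :
    relOf φ ∈ starCoatoms α β := by
  refine ⟨ssubset_of_subset_of_ne (relOf_subset φ) h, ?_, ?_⟩
  · intro q hq
    cases hg : φ.g (some ⟨q, hq⟩) with
    | none => exact Or.inr (sec1_relOf_none hq hg)
    | some y => exact Or.inl ⟨y.val, y.prop, sec1_relOf_some hq hg⟩
  · intro p hp
    cases hf : φ.f (some ⟨p, hp⟩) with
    | none => exact Or.inr (sec2_relOf_none hp hf)
    | some x => exact Or.inl ⟨x.val, x.prop, sec2_relOf_some hp hf⟩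

lemma relOf_constHom : relOf (constHom (FObj α) (FObj β)) = atomPairs α β := by
  ext z
  constructor
  · exact fun hz => hz.choose
  · exact fun h => ⟨h, fun hf => hf⟩

end RelDef
section Main

variable {α β : Type u} [CompleteLattice α] [CompleteLattice β]

/-- Forward map on the `X` side : a Chu morphism gives a coatom (or the top point). -/
noncomputable def fwdX (hα : CalCond α) (hβ : CalCond β)
    (φ : ChuHom (FObj α) ((FObj β).dual)) :
    Option {R : Set (α × β) // IsCoatomF (tensorCS α β) (atomPairs α β) R} :=
  @dite _ (relOf φ = atomPairs α β) (Classical.dec _) (fun _ => none)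
    (fun h => some ⟨relOf φ, isCoatomF_of_star hα.1 hβ.1 hβ.2.2.1 (relOf_star h)⟩)

/-- Backward map on the `X` side. -/
noncomputable def bwdX (hα : CalCond α) (hβ : CalCond β) :
    Option {R : Set (α × β) // IsCoatomF (tensorCS α β) (atomPairs α β) R} →
      ChuHom (FObj α) ((FObj β).dual)
  | none => constHom (FObj α) (FObj β)
  | some R =>
    { f := fun a => match a with
        | none => none
        | some p => pick (sec2 R.val p.val)
      g := fun y => match y with
        | none => none
        | some q => pick (sec1 R.val q.val)
      hf := rfl
      hg := rfl
      compat := by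
        intro a y
        have hstar := star_of_isCoatomF R.prop
        cases a with
        | none =>
          exact iff_of_false (fun hh => (FObj β).hx y hh) (fun hh => (FObj α).ha _ hh)
        | some p =>
          cases y with
          | none => exact iff_of_false (fun hh => (FObj β).ha (pick (sec2 R.val p.val)) hh) (fun hh => (FObj α).hx (some p) hh)
          | some q =>
            exact (r_pick hβ.1 (hstar.2.2 p.val p.prop) q.prop).trans
              (r_pick hα.1 (hstar.2.1 q.val q.prop) p.prop).symm }

lemma ChuHom_ext {M N : ChuObj} {φ ψ : ChuHom M N} (hf : φ.f = ψ.f) (hg : φ.g = ψ.g) :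
    φ = ψ := by
  cases φ; cases ψ
  simp only at hf hg
  subst hf; subst hg; rfl

lemma bwdX_fwdX (hα : CalCond α) (hβ : CalCond β) (φ : ChuHom (FObj α) ((FObj β).dual)) :
    bwdX hα hβ (fwdX hα hβ φ) = φ := by
  by_cases h : relOf φ = atomPairs α β
  · rw [show fwdX hα hβ φ = none from by unfold fwdX; rw [dif_pos h]]
    refine (ChuHom_ext ?_ ?_).symm
    · funext a
      cases a with
      | none => exact φ.hf
      | some p =>
        cases hf : φ.f (some p) with
        | none => rfl
        | some x =>
          exfalso
          have hf' : φ.f (some ⟨p.val, p.prop⟩) = some x := hf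
          have hs := sec2_relOf_some p.prop hf'
          have hall : sec2 (relOf φ) p.val = {q : β | IsAtom q} := by
            ext q
            constructor
            · intro hq
              exact (relOf_subset φ hq).2
            · intro hq
              show (p.val, q) ∈ relOf φ
              rw [h]; exact ⟨p.prop, hq⟩
          exact atomsBelow_ne_allAtoms hβ.1 x.prop (hs.symm.trans hall)
    · funext y
      cases y with
      | none => exact φ.hg
      | some q =>
        cases hg : φ.g (some q) with
        | none => rfl
        | some v =>
          exfalso
          have hg' : φ.g (some ⟨q.val, q.prop⟩) = some v := hg
          have hs := sec1_relOf_some q.prop hg'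
          have hall : sec1 (relOf φ) q.val = {p : α | IsAtom p} := by
            ext p
            constructor
            · intro hp
              exact (relOf_subset φ hp).1
            · intro hp
              show (p, q.val) ∈ relOf φ
              rw [h]; exact ⟨hp, q.prop⟩
          exact atomsBelow_ne_allAtoms hα.1 v.prop (hs.symm.trans hall)
  · rw [show fwdX hα hβ φ =
        some ⟨relOf φ, isCoatomF_of_star hα.1 hβ.1 hβ.2.2.1 (relOf_star h)⟩ from by
      unfold fwdX; rw [dif_neg h]]
    refine ChuHom_ext ?_ ?_
    · funext a
      cases a with
      | none => exact φ.hf.symm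
      | some p =>
        show pick (sec2 (relOf φ) p.val) = φ.f (some p)
        cases hf : φ.f (some p) with
        | none =>
          have hf' : φ.f (some ⟨p.val, p.prop⟩) = none := hf
          rw [sec2_relOf_none p.prop hf', pick_allAtoms hβ.1]
        | some x =>
          have hf' : φ.f (some ⟨p.val, p.prop⟩) = some x := hf
          rw [sec2_relOf_some p.prop hf', pick_atomsBelow hβ.1 x.prop]
    · funext y
      cases y with
      | none => exact φ.hg.symm
      | some q =>
        show pick (sec1 (relOf φ) q.val) = φ.g (some q)
        cases hg : φ.g (some q) with
        | none =>
          have hg' : φ.g (some ⟨q.val, q.prop⟩) = none := hg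
          rw [sec1_relOf_none q.prop hg', pick_allAtoms hα.1]
        | some v =>
          have hg' : φ.g (some ⟨q.val, q.prop⟩) = some v := hg
          rw [sec1_relOf_some q.prop hg', pick_atomsBelow hα.1 v.prop]

lemma relOf_bwdX_some (hα : CalCond α) (hβ : CalCond β)
    (R : {R : Set (α × β) // IsCoatomF (tensorCS α β) (atomPairs α β) R}) :
    relOf (bwdX hα hβ (some R)) = R.val := by
  have hstar := star_of_isCoatomF R.prop
  ext z
  constructor
  · intro hz
    obtain ⟨hp, hq⟩ := hz.choose
    have hr : ¬ (FObj α).r (some ⟨z.1, hp⟩) (pick (sec1 R.val z.2)) := hz.choose_spec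
    have hmem : z.1 ∈ sec1 R.val z.2 :=
      not_not.mp (fun hn => hr ((r_pick hα.1 (hstar.2.1 z.2 hq) hp).mpr hn))
    exact hmem
  · intro hz
    obtain ⟨hp, hq⟩ := hstar.1.subset hz
    refine ⟨⟨hp, hq⟩, ?_⟩
    show ¬ (FObj α).r (some ⟨z.1, hp⟩) (pick (sec1 R.val z.2))
    exact fun hr => ((r_pick hα.1 (hstar.2.1 z.2 hq) hp).mp hr) hz

lemma fwdX_bwdX (hα : CalCond α) (hβ : CalCond β)
    (o : Option {R : Set (α × β) // IsCoatomF (tensorCS α β) (atomPairs α β) R}) :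
    fwdX hα hβ (bwdX hα hβ o) = o := by
  cases o with
  | none =>
    show fwdX hα hβ (constHom (FObj α) (FObj β)) = none
    unfold fwdX
    rw [dif_pos relOf_constHom]
  | some R =>
    have hrel := relOf_bwdX_some hα hβ R
    unfold fwdX
    rw [dif_neg (by rw [hrel]; exact R.prop.2.1)]
    exact congrArg some (Subtype.ext hrel)

/-- Forward map on the `A` side. -/
def fwdA : (chuTensor (FObj α) (FObj β)).A → (FObjCS (tensorCS α β) (atomPairs α β)).A
  | none => none
  | some ⟨(some p, some q), _⟩ => some ⟨(p.val, q.val), ⟨p.prop, q.prop⟩⟩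
  | some ⟨(none, _), h⟩ => absurd rfl h.1
  | some ⟨(_, none), h⟩ => absurd rfl h.2

/-- Backward map on the `A` side. -/
def bwdA : (FObjCS (tensorCS α β) (atomPairs α β)).A → (chuTensor (FObj α) (FObj β)).A
  | none => none
  | some z => some ⟨(some ⟨z.val.1, z.prop.1⟩, some ⟨z.val.2, z.prop.2⟩),
      ⟨Option.some_ne_none _, Option.some_ne_none _⟩⟩

lemma bwdA_fwdA (a : (chuTensor (FObj α) (FObj β)).A) : bwdA (fwdA a) = a := by
  rcases a with _ | ⟨⟨_ | p, _ | q⟩, h⟩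
  · rfl
  · exact absurd rfl h.1
  · exact absurd rfl h.1
  · exact absurd rfl h.2
  · rfl

lemma fwdA_bwdA (a : (FObjCS (tensorCS α β) (atomPairs α β)).A) : fwdA (bwdA a) = a := by
  rcases a with _ | ⟨⟨p, q⟩, h⟩ <;> rfl

lemma relOf_of_fwdX_none {hα : CalCond α} {hβ : CalCond β}
    {φ : ChuHom (FObj α) ((FObj β).dual)} (h : fwdX hα hβ φ = none) :
    relOf φ = atomPairs α β := by
  by_contra hne
  unfold fwdX at h
  rw [dif_neg hne] at h
  cases h

end Main
/-- `F(L1) ⊗_C F(L2) ≅ F(L1 ⊛ L2)` in `Chu(Set₀, 2₀)`. -/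
theorem chuTensor_iso_F_tensor {α β : Type u} [CompleteLattice α] [CompleteLattice β]
    (hα : CalCond α) (hβ : CalCond β) :
    Nonempty (ChuIso (chuTensor (FObj α) (FObj β))
      (FObjCS (tensorCS α β) (atomPairs α β))) := by
  refine ⟨⟨⟨fwdA, bwdA, bwdA_fwdA, fwdA_bwdA⟩,
      ⟨fwdX hα hβ, bwdX hα hβ, bwdX_fwdX hα hβ, fwdX_bwdX hα hβ⟩, rfl, ?_, ?_⟩⟩
  · show fwdX hα hβ (constHom (FObj α) (FObj β)) = none
    unfold fwdX
    rw [dif_pos relOf_constHom]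
  · intro a φ
    show (FObjCS (tensorCS α β) (atomPairs α β)).r (fwdA a) (fwdX hα hβ φ) ↔
      (chuTensor (FObj α) (FObj β)).r a φ
    rcases a with _ | ⟨⟨_ | p, _ | q⟩, hne⟩
    · cases h : fwdX hα hβ φ with
      | none => exact iff_of_false (fun x => x) (fun x => x)
      | some S => exact iff_of_false (fun x => x) (fun x => x)
    · exact absurd rfl hne.1
    · exact absurd rfl hne.1
    · exact absurd rfl hne.2
    · cases h : fwdX hα hβ φ with
      | none =>
        have hrel := relOf_of_fwdX_none h
        have hm : (p.val, q.val) ∈ relOf φ := by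
          rw [hrel]; exact ⟨p.prop, q.prop⟩
        have hr : ¬ (FObj α).r (some ⟨p.val, p.prop⟩) (φ.g (some ⟨q.val, q.prop⟩)) :=
          hm.choose_spec
        exact iff_of_false (fun x => x) hr
      | some S =>
        have hS : S.val = relOf φ := by
          unfold fwdX at h
          by_cases hne' : relOf φ = atomPairs α β
          · rw [dif_pos hne'] at h; cases h
          · rw [dif_neg hne'] at h
            exact (congrArg Subtype.val (Option.some.inj h)).symm
        show (p.val, q.val) ∉ S.val ↔ (FObj α).r (some p) (φ.g (some q))
        rw [hS]
        constructor
        · intro hn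
          by_contra hr
          exact hn ⟨⟨p.prop, q.prop⟩, hr⟩
        · intro hr hm
          exact hm.choose_spec hr
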